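/- The symmetric profile with every agent demanding C/n is a Nash equilibrium of the SWA-induced game when λ ≥ (n-β)/(n-1), 1 < β ≤ n, n ≥ 2, and C/n ≤ x_max: no unilateral deviation in [0, x_max] increases U_i^λ. Deviating downward loses the positive per-unit gain in the non-overloaded regime (where ∂U_i^λ/∂x_i = (1-λ) + λ/n > 0), and deviating upward is non-profitable since the overloaded slope g(λ) ≤ 0. -/

import Mathlib

/-!
Fix the other agents' total demand `S`, so that agent `i`'s utility is a function of its own
demand `x` alone, piecewise linear with a kink at `S + x = C`. Below the kink its slope is
`(1 - λ) + λ/n ≥ 0`, above it the slope is `g(λ) ≤ 0`, so the kink `x = C - S` is a global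
maximiser. At the symmetric profile `S = (n - 1) C/n`, the kink is `x = C/n`.
-/

/-- Utility `U_i^λ` of an agent demanding `x` when the other agents demand `S` in total. -/
noncomputable def swaUtility (n : ℕ) (β C lam S x : ℝ) : ℝ :=
  (1 - lam) * (x - (β / n) * max 0 (S + x - C)) +
    (lam / n) * ((S + x) - β * max 0 (S + x - C))

noncomputable def underloadSlope (n : ℕ) (lam : ℝ) : ℝ := (1 - lam) + lam / n

noncomputable def overloadSlope (n : ℕ) (β lam : ℝ) : ℝ := (1 - lam) * (1 - β / n) + (lam / n) * (1 - β)

section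

variable {n : ℕ} {β C lam S x y : ℝ}

theorem swaUtility_sub_of_le_capacity (hx : S + x ≤ C) (hy : S + y ≤ C) :
    swaUtility n β C lam S y - swaUtility n β C lam S x = underloadSlope n lam * (y - x) := by
  simp only [swaUtility, underloadSlope, max_eq_left (sub_nonpos.mpr hx),
    max_eq_left (sub_nonpos.mpr hy)]
  ring

theorem swaUtility_sub_of_capacity_le (hx : C ≤ S + x) (hy : C ≤ S + y) :
    swaUtility n β C lam S y - swaUtility n β C lam S x = overloadSlope n β lam * (y - x) := by
  simp only [swaUtility, overloadSlope, max_eq_right (sub_nonneg.mpr hx),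
    max_eq_right (sub_nonneg.mpr hy)]
  ring

theorem underloadSlope_nonneg (hn : 1 ≤ n) (hlam : lam ≤ 1) : 0 ≤ underloadSlope n lam := by
  have hn' : (1 : ℝ) ≤ n := by exact_mod_cast hn
  have hinv : (n : ℝ)⁻¹ ≤ 1 := inv_le_one_of_one_le₀ hn'
  have : underloadSlope n lam = (1 - lam) * (1 - (n : ℝ)⁻¹) + (n : ℝ)⁻¹ := by
    simp only [underloadSlope, div_eq_mul_inv]
    ring
  rw [this]
  have := inv_nonneg.mpr (Nat.cast_nonneg (α := ℝ) n)
  nlinarith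

theorem overloadSlope_nonpos (hn : 2 ≤ n) (hlam : ((n : ℝ) - β) / (n - 1) ≤ lam) :
    overloadSlope n β lam ≤ 0 := by
  have hn' : (2 : ℝ) ≤ n := by exact_mod_cast hn
  have hlam' : (n : ℝ) - β ≤ lam * (n - 1) := (div_le_iff₀ (by linarith)).mp hlam
  have : overloadSlope n β lam = ((n : ℝ) - β - lam * (n - 1)) / n := by
    rw [overloadSlope]
    field_simp
    ring
  rw [this]
  exact div_nonpos_of_nonpos_of_nonneg (by linarith) (by linarith)

theorem swaUtility_le_of_add_eq_capacity (hn : 2 ≤ n) (hlam1 : lam ≤ 1)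
    (hlam : ((n : ℝ) - β) / (n - 1) ≤ lam) (hx : S + x = C) (y : ℝ) :
    swaUtility n β C lam S y ≤ swaUtility n β C lam S x := by
  rcases le_total (S + y) C with hy | hy
  · have h := swaUtility_sub_of_le_capacity (β := β) (lam := lam) (n := n) hx.le hy
    nlinarith [underloadSlope_nonneg (by omega : 1 ≤ n) hlam1]
  · have h := swaUtility_sub_of_capacity_le (β := β) (lam := lam) (n := n) hx.ge hy
    nlinarith [overloadSlope_nonpos hn hlam]

end

theorem stmt_15_general (n : ℕ) (hn : 2 ≤ n) (β C xmax lam : ℝ)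
    (hlam1 : lam ≤ 1) (hlam : ((n : ℝ) - β) / (n - 1) ≤ lam) :
    ∀ xi ∈ Set.Icc (0 : ℝ) xmax,
      ((1 - lam) * (xi - (β / n) *
          max 0 ((((n : ℝ) - 1) * (C / n) + xi) - C)) +
        (lam / n) * ((((n : ℝ) - 1) * (C / n) + xi)
          - β * max 0 ((((n : ℝ) - 1) * (C / n) + xi) - C)))
      ≤
      ((1 - lam) * (C / n - (β / n) *
          max 0 ((((n : ℝ) - 1) * (C / n) + C / n) - C)) +
        (lam / n) * ((((n : ℝ) - 1) * (C / n) + C / n)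
          - β * max 0 ((((n : ℝ) - 1) * (C / n) + C / n) - C))) := by
  intro xi _
  have hn0 : (n : ℝ) ≠ 0 := by positivity
  have hkink : ((n : ℝ) - 1) * (C / n) + C / n = C := by
    field_simp
    ring
  exact swaUtility_le_of_add_eq_capacity hn hlam1 hlam hkink xi

/-- The symmetric profile with every agent demanding `C/n` is a Nash equilibrium
of the SWA-induced game when `λ ≥ (n-β)/(n-1)`, `1 < β ≤ n`, `n ≥ 2`,
`C/n ≤ x_max`: no unilateral deviation `xᵢ ∈ [0, x_max]` increases
`U_i^λ(xᵢ) = (1-λ)[xᵢ - (β/n)max(0, X-C)] + (λ/n)[X - β·max(0, X-C)]`,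
where `X = (n-1)·(C/n) + xᵢ`. -/
theorem stmt_15 (n : ℕ) (hn : 2 ≤ n) (β C xmax lam : ℝ) (hC : 0 < C)
    (hβ1 : 1 < β) (hβn : β ≤ n) (hxm : C / n ≤ xmax)
    (hlam1 : lam ≤ 1) (hlam : ((n : ℝ) - β) / (n - 1) ≤ lam) :
    ∀ xi ∈ Set.Icc (0 : ℝ) xmax,
      ((1 - lam) * (xi - (β / n) *
          max 0 ((((n : ℝ) - 1) * (C / n) + xi) - C)) +
        (lam / n) * ((((n : ℝ) - 1) * (C / n) + xi)
          - β * max 0 ((((n : ℝ) - 1) * (C / n) + xi) - C)))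
      ≤
      ((1 - lam) * (C / n - (β / n) *
          max 0 ((((n : ℝ) - 1) * (C / n) + C / n) - C)) +
        (lam / n) * ((((n : ℝ) - 1) * (C / n) + C / n)
          - β * max 0 ((((n : ℝ) - 1) * (C / n) + C / n) - C))) :=
  stmt_15_general n hn β C xmax lam hlam1 hlam
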